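/- Let R be a (possibly noncommutative) ring with unity, let h ≥ 0 and m, n ≥ 1 be integers, and let x, y, a, b ∈ R satisfy: (i) there exist c_0, …, c_h ∈ R with c_h ≠ 0 such that y^k x^k = ∑_{ℓ=0}^{h} k^ℓ • c_ℓ for every k ≥ 0 (• denoting natural number scalar multiplication in R); (ii) a^n = 0; (iii) b^m = 0; (iv) a x = x a; (v) b y = y b. Then the sequence k ↦ (y+b)^k (x+a)^k is an arithmetic progression of order n + m + h − 2 in the additive group of R. -/

import Mathlib

/-!
Expand both powers by the binomial theorem: since `a` and `b` are nilpotent, only the terms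
`C(k,j) b^j y^(k-j) · x^(k-i) C(k,i) a^i` with `j < m`, `i < n` survive. Put `s = max i j` and let
`P` be the degree-`h` polynomial with `P k = y^k x^k`. For `k ≥ s` the middle factor is
`y^(s-j) P(k-s) x^(s-i)`, and for `k < s` one of the binomial coefficients vanishes, so the term is
the product of sequences of orders `j`, `h` and `i`. A sequence is an arithmetic progression of
order `p` exactly when its `(p+1)`-st forward difference vanishes, so the discrete Leibniz rule
`Δ(fg) = Δf · g(·+1) + f · Δg` shows that orders add under products. Hence every term, and so the
sum, has order at most `(m-1) + h + (n-1)`.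
-/

/-- `u` is an arithmetic progression of order `h` in an additive commutative group. -/
def IsAPOfOrder {G : Type*} [AddCommGroup G] (u : ℕ → G) (h : ℕ) : Prop :=
  ∀ n : ℕ, ∑ k ∈ Finset.range (h + 2), ((-1 : ℤ) ^ (h + 1 - k) * ((h + 1).choose k)) • u (n + k) = 0

open Finset Function fwdDiff

section AddCommGroup

variable {G H : Type*} [AddCommGroup G] [AddCommGroup H] {u : ℕ → G} {p q : ℕ}

theorem fwdDiff_iter_addMonoidHom_comp {M : Type*} [AddCommMonoid M] (φ : G →+ H) (d : M)
    (f : M → G) (r : ℕ) : Δ_[d] ^[r] (fun x => φ (f x)) = fun x => φ (Δ_[d] ^[r] f x) := by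
  induction r generalizing f with
  | zero => rfl
  | succ r ih =>
    rw [iterate_succ_apply, iterate_succ_apply, ← ih]
    congr 1
    ext x
    exact (map_sub φ _ _).symm

theorem isAPOfOrder_iff_fwdDiff_iter : IsAPOfOrder u p ↔ Δ_[1] ^[p + 1] u = 0 := by
  simp only [IsAPOfOrder, funext_iff, fwdDiff_iter_eq_sum_shift, smul_eq_mul, mul_one,
    Pi.zero_apply]

theorem isAPOfOrder_succ_iff : IsAPOfOrder u (p + 1) ↔ IsAPOfOrder (Δ_[1] u) p := by
  rw [isAPOfOrder_iff_fwdDiff_iter, isAPOfOrder_iff_fwdDiff_iter, iterate_succ_apply]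

theorem isAPOfOrder_zero_iff : IsAPOfOrder u 0 ↔ Δ_[1] u = 0 :=
  isAPOfOrder_iff_fwdDiff_iter

theorem IsAPOfOrder.mono (hu : IsAPOfOrder u p) (hpq : p ≤ q) : IsAPOfOrder u q := by
  rw [isAPOfOrder_iff_fwdDiff_iter] at hu ⊢
  obtain ⟨r, rfl⟩ := Nat.exists_eq_add_of_le hpq
  rw [show p + r + 1 = r + (p + 1) by omega, iterate_add_apply, hu]
  exact iterate_fixed (fwdDiff_const (1 : ℕ) (0 : G)) r

theorem IsAPOfOrder.add {v : ℕ → G} (hu : IsAPOfOrder u p) (hv : IsAPOfOrder v p) :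
    IsAPOfOrder (fun k => u k + v k) p := fun n => by
  simp only [smul_add, sum_add_distrib, hu n, hv n, add_zero]

theorem IsAPOfOrder.sum {ι : Type*} {s : Finset ι} {v : ι → ℕ → G}
    (hv : ∀ i ∈ s, IsAPOfOrder (v i) p) : IsAPOfOrder (fun k => ∑ i ∈ s, v i k) p := by
  intro n
  simp_rw [smul_sum]
  rw [sum_comm]
  exact sum_eq_zero fun i hi => hv i hi n

theorem IsAPOfOrder.map (hu : IsAPOfOrder u p) (φ : G →+ H) :
    IsAPOfOrder (fun k => φ (u k)) p := fun n => by
  simpa only [map_sum, map_zsmul, map_zero] using congr_arg φ (hu n)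

theorem IsAPOfOrder.comp_add_one (hu : IsAPOfOrder u p) : IsAPOfOrder (fun k => u (k + 1)) p :=
  fun n => by simpa only [add_right_comm] using hu (n + 1)

theorem isAPOfOrder_choose (i : ℕ) : IsAPOfOrder (fun k : ℕ => (k.choose i : ℤ)) i := by
  have hchoose := fwdDiff_iter_choose 0 i
  rw [add_zero] at hchoose
  rw [isAPOfOrder_iff_fwdDiff_iter, iterate_succ_apply', hchoose]
  simp only [Nat.choose_zero_right, Nat.cast_one, fwdDiff_const]
  rfl

theorem isAPOfOrder_natCast_add_of_fwdDiff_iter {f : ℤ → G} (hf : Δ_[1] ^[p + 1] f = 0) (z : ℤ) :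
    IsAPOfOrder (fun k : ℕ => f (k + z)) p := fun n => by
  simpa [fwdDiff_iter_eq_sum_shift, add_right_comm] using congr_fun hf (n + z)

theorem fwdDiff_iter_sum_pow_zsmul_eq_zero (c : ℕ → G) (d : ℕ) :
    Δ_[1] ^[d + 1] (fun z : ℤ => ∑ ℓ ∈ range (d + 1), z ^ ℓ • c ℓ) = 0 := by
  simp_rw [← sum_fn, fwdDiff_iter_finsetSum]
  refine sum_eq_zero fun ℓ hℓ => ?_
  have hpow := fwdDiff_iter_pow_eq_zero_of_lt (R := ℤ) (mem_range.mp hℓ)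
  have hcomp := fwdDiff_iter_addMonoidHom_comp (zmultiplesHom G (c ℓ)) 1 (fun z : ℤ => z ^ ℓ)
    (d + 1)
  simp only [zmultiplesHom_apply, hpow, Pi.zero_apply, zero_smul] at hcomp
  exact hcomp

end AddCommGroup

section Ring

variable {R : Type*} [Ring R]

theorem fwdDiff_mul {M : Type*} [AddCommMonoid M] (d : M) (f g : M → R) :
    Δ_[d] (fun x => f x * g x) = fun x => Δ_[d] f x * g (x + d) + f x * Δ_[d] g x := by
  ext x
  simp only [fwdDiff, sub_mul, mul_sub]
  abel

theorem IsAPOfOrder.mul {f g : ℕ → R} {p q : ℕ} (hf : IsAPOfOrder f p) (hg : IsAPOfOrder g q) :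
    IsAPOfOrder (fun k => f k * g k) (p + q) := by
  induction p generalizing f q g with
  | zero =>
    rw [isAPOfOrder_zero_iff] at hf
    induction q generalizing g with
    | zero =>
      rw [isAPOfOrder_zero_iff] at hg ⊢
      simp only [fwdDiff_mul, hf, hg, Pi.zero_apply, zero_mul, mul_zero, add_zero]
      rfl
    | succ q ih =>
      rw [zero_add, isAPOfOrder_succ_iff, fwdDiff_mul, hf]
      simpa only [Pi.zero_apply, zero_mul, zero_add] using ih (isAPOfOrder_succ_iff.mp hg)
  | succ p ihp =>
    induction q generalizing g with
    | zero =>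
      have hg' := hg.comp_add_one
      rw [isAPOfOrder_zero_iff] at hg
      rw [add_zero, isAPOfOrder_succ_iff, fwdDiff_mul, hg]
      simpa only [Pi.zero_apply, mul_zero, add_zero] using ihp (isAPOfOrder_succ_iff.mp hf) hg'
    | succ q ihq =>
      have h₁ := ihp (isAPOfOrder_succ_iff.mp hf) hg.comp_add_one
      have h₂ := ihq (isAPOfOrder_succ_iff.mp hg)
      rw [show p + 1 + (q + 1) = p + (q + 1) + 1 by omega, isAPOfOrder_succ_iff, fwdDiff_mul]
      exact h₁.add (h₂.mono (by omega))

theorem Commute.add_pow_eq_sum_range_of_pow_eq_zero {a x : R} {n : ℕ} (h : Commute a x)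
    (ha : a ^ n = 0) (k : ℕ) :
    (a + x) ^ k = ∑ i ∈ range n, k.choose i • (a ^ i * x ^ (k - i)) := by
  have hvanish : ∀ i ≥ min (k + 1) n, k.choose i • (a ^ i * x ^ (k - i)) = 0 := by
    intro i hi
    obtain hi | hi := min_le_iff.mp hi
    · rw [Nat.choose_eq_zero_of_lt hi, zero_smul]
    · rw [pow_eq_zero_of_le hi ha, zero_mul, smul_zero]
  calc (a + x) ^ k = ∑ i ∈ range (k + 1), k.choose i • (a ^ i * x ^ (k - i)) := by
        simp_rw [h.add_pow, nsmul_eq_mul, Nat.cast_comm]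
    _ = ∑ i ∈ range n, k.choose i • (a ^ i * x ^ (k - i)) :=
        (eventually_constant_sum hvanish (min_le_left _ _)).trans
          (eventually_constant_sum hvanish (min_le_right _ _)).symm

variable {x y a b : R} {P : ℤ → R}

theorem pow_mul_pow_eq_of_le (hP : ∀ k : ℕ, y ^ k * x ^ k = P k) {i j s k : ℕ} (hi : i ≤ s)
    (hj : j ≤ s) (hs : s ≤ k) :
    y ^ (k - j) * x ^ (k - i) = y ^ (s - j) * P (k - s) * x ^ (s - i) := by
  rw [← Nat.cast_sub hs, ← hP, show k - j = s - j + (k - s) by omega,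
    show k - i = k - s + (s - i) by omega, pow_add, pow_add]
  simp only [mul_assoc]

theorem add_pow_mul_add_pow_eq_sum (hP : ∀ k : ℕ, y ^ k * x ^ k = P k) {m n : ℕ}
    (ha : a ^ n = 0) (hb : b ^ m = 0) (hax : Commute a x) (hby : Commute b y) (k : ℕ) :
    (y + b) ^ k * (x + a) ^ k = ∑ j ∈ range m, ∑ i ∈ range n,
      ((k.choose j : ℤ) • b ^ j) * (y ^ (max i j - j) * P (k - max i j) * x ^ (max i j - i)) *
        ((k.choose i : ℤ) • a ^ i) := by
  rw [add_comm y, add_comm x, hby.add_pow_eq_sum_range_of_pow_eq_zero hb,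
    hax.add_pow_eq_sum_range_of_pow_eq_zero ha, sum_mul_sum]
  refine sum_congr rfl fun j _ => sum_congr rfl fun i _ => ?_
  rcases le_or_gt (max i j) k with hk | hk
  · rw [← pow_mul_pow_eq_of_le hP (le_max_left i j) (le_max_right i j) hk, natCast_zsmul,
      natCast_zsmul, (hax.pow_pow i (k - i)).eq]
    simp only [smul_mul_assoc, mul_smul_comm, mul_assoc]
  · obtain hk | hk := lt_max_iff.mp hk <;> simp [Nat.choose_eq_zero_of_lt hk]

end Ring

theorem stmt_10_general {R : Type*} [Ring R] (h m n : ℕ)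
    (x y a b : R)
    (c : ℕ → R)
    (hpoly : ∀ k : ℕ, y ^ k * x ^ k = ∑ ℓ ∈ Finset.range (h + 1), (k ^ ℓ) • c ℓ)
    (ha : a ^ n = 0) (hb : b ^ m = 0)
    (hax : a * x = x * a) (hby : b * y = y * b) :
    IsAPOfOrder (fun k => (y + b) ^ k * (x + a) ^ k) (n + m + h - 2) := by
  -- `P` is defined on `ℤ` so that `k ↦ P (k - s)` is polynomial in `k` also for `k < s`.
  set P : ℤ → R := fun z => ∑ ℓ ∈ range (h + 1), z ^ ℓ • c ℓ
  have hP : ∀ k : ℕ, y ^ k * x ^ k = P k := fun k => by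
    simp only [hpoly, P, ← natCast_zsmul, Nat.cast_pow]
  have hPdeg : Δ_[1] ^[h + 1] P = 0 := fwdDiff_iter_sum_pow_zsmul_eq_zero c h
  simp_rw [add_pow_mul_add_pow_eq_sum hP ha hb hax hby]
  refine IsAPOfOrder.sum fun j hj => IsAPOfOrder.sum fun i hi => ?_
  have hmid : IsAPOfOrder
      (fun k : ℕ => y ^ (max i j - j) * P (k - max i j) * x ^ (max i j - i)) h := by
    simpa only [AddMonoidHom.coe_mulLeft, AddMonoidHom.coe_mulRight, mul_assoc, sub_eq_add_neg]
      using ((isAPOfOrder_natCast_add_of_fwdDiff_iter hPdeg (-(max i j : ℕ))).map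
        (AddMonoidHom.mulRight (x ^ (max i j - i)))).map (AddMonoidHom.mulLeft (y ^ (max i j - j)))
  have hbj := (isAPOfOrder_choose j).map (zmultiplesHom R (b ^ j))
  have hai := (isAPOfOrder_choose i).map (zmultiplesHom R (a ^ i))
  simp only [zmultiplesHom_apply] at hbj hai
  exact ((hbj.mul hmid).mul hai).mono (by simp only [mem_range] at hi hj; omega)

theorem stmt_10 {R : Type*} [Ring R] (h m n : ℕ) (hm : 1 ≤ m) (hn : 1 ≤ n)
    (x y a b : R)
    (c : ℕ → R) (hch : c h ≠ 0)
    (hpoly : ∀ k : ℕ, y ^ k * x ^ k = ∑ ℓ ∈ Finset.range (h + 1), (k ^ ℓ) • c ℓ)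
    (ha : a ^ n = 0) (hb : b ^ m = 0)
    (hax : a * x = x * a) (hby : b * y = y * b) :
    IsAPOfOrder (fun k => (y + b) ^ k * (x + a) ^ k) (n + m + h - 2) :=
  stmt_10_general h m n x y a b c hpoly ha hb hax hby
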